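/- For all real numbers t < T, σ > 0 and δ > 0, one has δ ∫_t^T e^{−δ(u−t)} N(−σ√(u−t)) du = 1/2 − e^{−δ(T−t)} N(−σ√(T−t)) − (σ/√(2δ+σ²)) · (N(√((2δ+σ²)(T−t))) − 1/2). -/

import Mathlib

open MeasureTheory Real Set Filter

/-- Standard normal cdf `N(x)`. -/
noncomputable def stdCdf (x : ℝ) : ℝ := ∫ y in Set.Iic x, Real.exp (-y ^ 2 / 2) / Real.sqrt (2 * Real.pi)

/-!
With `c = 2δ + σ²`, the completed square `e^{-δs} n(σ√s) = n(√(cs))` makes the two terms coming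
from `N(-σ√s)` and `N(√(cs))` cancel when differentiating
`F(s) = -e^{-δs} N(-σ√s) - (σ/√c) N(√(cs))`, so that `F'(s) = δ e^{-δs} N(-σ√s)` for `s > 0`.
The identity is then the fundamental theorem of calculus on `[0, T - t]`, with `N(0) = 1/2`.
-/

noncomputable def stdPdf (x : ℝ) : ℝ := exp (-x ^ 2 / 2) / √(2 * π)

lemma stdCdf_eq_integral_stdPdf (x : ℝ) : stdCdf x = ∫ y in Iic x, stdPdf y := rfl

lemma stdPdf_neg (x : ℝ) : stdPdf (-x) = stdPdf x := by
  simp only [stdPdf, neg_sq]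

lemma continuous_stdPdf : Continuous stdPdf := by
  unfold stdPdf
  fun_prop

lemma stdPdf_eq_gaussian : stdPdf = fun y ↦ exp (-(1 / 2) * y ^ 2) / √(2 * π) := by
  ext y
  simp only [stdPdf]
  ring_nf

lemma integrable_stdPdf : Integrable stdPdf := by
  rw [stdPdf_eq_gaussian]
  exact (integrable_exp_neg_mul_sq (by norm_num)).div_const _

lemma integral_stdPdf : ∫ y, stdPdf y = 1 := by
  rw [stdPdf_eq_gaussian, integral_div, integral_gaussian, show π / (1 / 2) = 2 * π by ring]
  exact div_self (by positivity)

lemma stdCdf_zero : stdCdf 0 = 1 / 2 := by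
  have h_sym : ∫ y in Ioi 0, stdPdf y = stdCdf 0 := by
    rw [stdCdf_eq_integral_stdPdf, ← neg_zero, ← integral_comp_neg_Ioi]
    simp only [stdPdf_neg, neg_zero]
  have h_split := intervalIntegral.integral_Iic_add_Ioi (b := 0)
    integrable_stdPdf.integrableOn integrable_stdPdf.integrableOn
  rw [h_sym, integral_stdPdf, ← stdCdf_eq_integral_stdPdf] at h_split
  linarith

lemma stdCdf_eq_half_add_integral (x : ℝ) : stdCdf x = 1 / 2 + ∫ y in 0..x, stdPdf y := by
  have h := intervalIntegral.integral_Iic_sub_Iic (a := 0) (b := x)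
    integrable_stdPdf.integrableOn integrable_stdPdf.integrableOn
  rw [← stdCdf_eq_integral_stdPdf, ← stdCdf_eq_integral_stdPdf, stdCdf_zero] at h
  linarith

lemma hasDerivAt_stdCdf (x : ℝ) : HasDerivAt stdCdf (stdPdf x) x := by
  rw [funext stdCdf_eq_half_add_integral]
  exact (intervalIntegral.integral_hasDerivAt_right integrable_stdPdf.intervalIntegrable
    continuous_stdPdf.stronglyMeasurable.stronglyMeasurableAtFilter
    continuous_stdPdf.continuousAt).const_add _

@[fun_prop]
lemma continuous_stdCdf : Continuous stdCdf :=
  continuous_iff_continuousAt.2 fun x ↦ (hasDerivAt_stdCdf x).continuousAt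

lemma stdPdf_eq_exp_mul_stdPdf {a x y : ℝ} (h : y ^ 2 = x ^ 2 + 2 * a) :
    stdPdf y = exp (-a) * stdPdf x := by
  rw [stdPdf, stdPdf, mul_div_assoc', ← exp_add, h]
  congr 2
  ring

lemma hasDerivAt_stdCdf_mul_sqrt (a : ℝ) {s : ℝ} (hs : 0 < s) :
    HasDerivAt (fun s ↦ stdCdf (a * √s)) (a * stdPdf (a * √s) / (2 * √s)) s := by
  refine ((hasDerivAt_stdCdf _).comp s ((hasDerivAt_sqrt hs.ne').const_mul a)).congr_deriv ?_
  ring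

theorem integral_exp_mul_stdCdf_neg_mul_sqrt (σ δ τ : ℝ) (hc : 0 < 2 * δ + σ ^ 2) (hτ : 0 ≤ τ) :
    δ * ∫ s in 0..τ, exp (-δ * s) * stdCdf (-σ * √s)
      = 1 / 2 - exp (-δ * τ) * stdCdf (-σ * √τ)
        - σ / √(2 * δ + σ ^ 2) * (stdCdf (√(2 * δ + σ ^ 2) * √τ) - 1 / 2) := by
  set c := 2 * δ + σ ^ 2 with hc_def
  set F : ℝ → ℝ := fun s ↦ -(exp (-δ * s) * stdCdf (-σ * √s)) - σ / √c * stdCdf (√c * √s)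
  have hF : ∀ s ∈ Ioo 0 τ, HasDerivAt F (δ * (exp (-δ * s) * stdCdf (-σ * √s))) s := by
    rintro s ⟨hs, -⟩
    have h_exp : HasDerivAt (fun s ↦ exp (-δ * s)) (exp (-δ * s) * -δ) s := by
      simpa using ((hasDerivAt_id' s).const_mul (-δ)).exp
    have h := ((h_exp.mul (hasDerivAt_stdCdf_mul_sqrt (-σ) hs)).neg).sub
      ((hasDerivAt_stdCdf_mul_sqrt √c hs).const_mul (σ / √c))
    have h_square : stdPdf (√c * √s) = exp (-(δ * s)) * stdPdf (-σ * √s) := by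
      apply stdPdf_eq_exp_mul_stdPdf
      rw [mul_pow, mul_pow, sq_sqrt hc.le, sq_sqrt hs.le, hc_def]
      ring
    refine h.congr_deriv ?_
    rw [h_square]
    field_simp
    ring
  have hF_cont : Continuous F := by fun_prop
  have h_ftc := intervalIntegral.integral_eq_sub_of_hasDerivAt_of_le hτ hF_cont.continuousOn hF
    ((by fun_prop : Continuous _).intervalIntegrable _ _)
  rw [← intervalIntegral.integral_const_mul, h_ftc]
  simp only [F, sqrt_zero, mul_zero, exp_zero, one_mul, stdCdf_zero]
  ring

theorem discounted_cdf_integral_identity_general (t T σ δ : ℝ) (htT : t < T) (hδ : 0 < δ) :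
    δ * ∫ u in t..T, Real.exp (-δ * (u - t)) * stdCdf (-(σ * Real.sqrt (u - t)))
      = 1 / 2 - Real.exp (-δ * (T - t)) * stdCdf (-(σ * Real.sqrt (T - t)))
        - σ / Real.sqrt (2 * δ + σ ^ 2) *
          (stdCdf (Real.sqrt ((2 * δ + σ ^ 2) * (T - t))) - 1 / 2) := by
  have h := integral_exp_mul_stdCdf_neg_mul_sqrt σ δ (T - t) (by positivity) (sub_nonneg.2 htT.le)
  simp only [neg_mul σ] at h
  rw [intervalIntegral.integral_comp_sub_right (fun s ↦ exp (-δ * s) * stdCdf (-(σ * √s))),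
    sub_self, h, sqrt_mul (by positivity)]

theorem discounted_cdf_integral_identity (t T σ δ : ℝ) (htT : t < T) (hσ : 0 < σ) (hδ : 0 < δ) :
    δ * ∫ u in t..T, Real.exp (-δ * (u - t)) * stdCdf (-(σ * Real.sqrt (u - t)))
      = 1 / 2 - Real.exp (-δ * (T - t)) * stdCdf (-(σ * Real.sqrt (T - t)))
        - σ / Real.sqrt (2 * δ + σ ^ 2) *
          (stdCdf (Real.sqrt ((2 * δ + σ ^ 2) * (T - t))) - 1 / 2) :=
  discounted_cdf_integral_identity_general t T σ δ htT hδ
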